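/- arXiv:1306.3802 — 4 statements merged into one kernel-verified Lean document; each statement's English description precedes it below -/
import Mathlib

section
/- Let R be a ring and U a left R-module such that Cogen(U) = ⊥U, where Cogen(U) is the class of modules embedding into some power U^α and ⊥U = {M : Ext¹_R(M,U) = 0}. Then the pair (Ker Hom_R(-,U), Cogen(U)) is a torsion pair in R-Mod: Hom_R(T,F) = 0 whenever Hom_R(T,U)=0 and F ∈ Cogen(U), every module M has a submodule t(M) with Hom_R(t(M),U)=0 and M/t(M) ∈ Cogen(U), and the two classes are maximal with respect to the orthogonality condition. -/
set_option linter.unusedVariables false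

universe u

open Function LinearMap

/-- `Ext¹_A(M,U) = 0`, encoded as: every short exact sequence `0 → U → E → M → 0` splits. -/
def Ext1Vanishes (A : Type u) [Ring A] (M U : Type u) [AddCommGroup M] [Module A M]
    [AddCommGroup U] [Module A U] : Prop :=
  ∀ (E : Type u) [AddCommGroup E] [Module A E] (i : U →ₗ[A] E) (p : E →ₗ[A] M),
    Function.Injective i → Function.Surjective p → LinearMap.range i = LinearMap.ker p →
    ∃ s : M →ₗ[A] E, p.comp s = LinearMap.id

/-- `U` is a 1-cotilting left `A`-module: injective dimension at most `1`,
`Ext¹(U^α, U) = 0` for every index type `α`, and `Hom(M,U) = 0 = Ext¹(M,U)` implies `M = 0`. -/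
def IsCotilting (A : Type u) [Ring A] (U : Type u) [AddCommGroup U] [Module A U] : Prop :=
  (∃ (E₀ E₁ : ModuleCat.{u} A), Module.Injective A E₀ ∧ Module.Injective A E₁ ∧
    ∃ (ι : U →ₗ[A] E₀) (π : E₀ →ₗ[A] E₁),
      Function.Injective ι ∧ Function.Surjective π ∧ LinearMap.range ι = LinearMap.ker π) ∧
  (∀ α : Type u, Ext1Vanishes A (α → U) U) ∧
  (∀ (M : Type u) [AddCommGroup M] [Module A M],
    (∀ f : M →ₗ[A] U, f = 0) → Ext1Vanishes A M U → Subsingleton M)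

/-- The evaluation map `δ_M : M → Hom_B(Hom_A(M,U),U)`, `m ↦ (φ ↦ φ m)`,
for a bimodule `U` over the rings `A` and `B`. -/
def evalMap (A B : Type u) [Ring A] [Ring B] (U : Type u) [AddCommGroup U] [Module A U]
    [Module B U] [SMulCommClass A B U] [SMulCommClass B A U]
    (M : Type u) [AddCommGroup M] [Module A M] :
    M →ₗ[A] ((M →ₗ[A] U) →ₗ[B] U) where
  toFun m :=
    { toFun := fun φ => φ m
      map_add' := fun φ ψ => rfl
      map_smul' := fun b φ => rfl }
  map_add' m n := by ext φ; simp
  map_smul' a m := by ext φ; simp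

/-- Precomposition with `f`, `Hom_A(N,U) → Hom_A(M,U)`, as a `B`-linear map. -/
def precompMap (A B : Type u) [Ring A] [Ring B] (U : Type u) [AddCommGroup U] [Module A U]
    [Module B U] [SMulCommClass A B U] {M N : Type u} [AddCommGroup M] [Module A M]
    [AddCommGroup N] [Module A N] (f : M →ₗ[A] N) :
    (N →ₗ[A] U) →ₗ[B] (M →ₗ[A] U) where
  toFun φ := φ.comp f
  map_add' φ ψ := LinearMap.add_comp _ _ _
  map_smul' b φ := rfl

private theorem torsionSub (R : Type u) [Ring R] (U : Type u) [AddCommGroup U] [Module R U]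
    (hcot : ∀ (M : Type u) [AddCommGroup M] [Module R M],
      (∃ (ι : Type u) (f : M →ₗ[R] (ι → U)), Function.Injective f) ↔ Ext1Vanishes R M U)
    (M : Type u) [AddCommGroup M] [Module R M] :
    ∃ t : Submodule R M,
      (∀ f : t →ₗ[R] U, f = 0) ∧
      ∃ (ι : Type u) (f : (M ⧸ t) →ₗ[R] (ι → U)), Function.Injective f := by
  set t : Submodule R M := ⨅ φ : M →ₗ[R] U, LinearMap.ker φ with ht
  have hmem : ∀ m : M, m ∈ t ↔ ∀ φ : M →ₗ[R] U, φ m = 0 := by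
    intro m; simp [ht, Submodule.mem_iInf, LinearMap.mem_ker]
  let e : M →ₗ[R] ((M →ₗ[R] U) → U) := LinearMap.pi (fun φ => φ)
  have hker : t ≤ LinearMap.ker e := by
    intro m hm
    have : e m = 0 := funext fun φ => (hmem m).1 hm φ
    exact this
  let f : (M ⧸ t) →ₗ[R] ((M →ₗ[R] U) → U) := t.liftQ e hker
  have hfinj : Function.Injective f := by
    rw [← LinearMap.ker_eq_bot]
    apply Submodule.ker_liftQ_eq_bot
    intro m hm
    rw [LinearMap.mem_ker] at hm
    exact (hmem m).2 fun φ => congrFun hm φ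
  have hext : Ext1Vanishes R (M ⧸ t) U := (hcot (M ⧸ t)).mp ⟨_, f, hfinj⟩
  refine ⟨t, ?_, _, f, hfinj⟩
  intro φ
  -- pushout E = (U × M) / W, W = {(-φ x, x) : x ∈ t}
  let w : t →ₗ[R] U × M := LinearMap.prod (-φ) t.subtype
  set W := LinearMap.range w with hW
  let i : U →ₗ[R] ((U × M) ⧸ W) := W.mkQ.comp (LinearMap.inl R U M)
  have hWker : W ≤ LinearMap.ker (t.mkQ.comp (LinearMap.snd R U M)) := by
    rintro z ⟨x, rfl⟩
    simp only [LinearMap.mem_ker, LinearMap.comp_apply, LinearMap.snd_apply,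
      LinearMap.prod_apply, Pi.prod, Submodule.subtype_apply, w]
    exact (Submodule.Quotient.mk_eq_zero t).2 x.2
  let p : ((U × M) ⧸ W) →ₗ[R] (M ⧸ t) := W.liftQ (t.mkQ.comp (LinearMap.snd R U M)) hWker
  have hiinj : Function.Injective i := by
    rw [← LinearMap.ker_eq_bot]
    rw [Submodule.eq_bot_iff]
    intro u hu
    rw [LinearMap.mem_ker] at hu
    rw [LinearMap.comp_apply, Submodule.mkQ_apply, Submodule.Quotient.mk_eq_zero] at hu
    have : ((u, (0 : M)) : U × M) ∈ W := hu
    obtain ⟨x, hx⟩ := this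
    have hx2 : (x : M) = 0 := congrArg Prod.snd hx
    have hx0 : x = 0 := Subtype.ext hx2
    have hx1 : -φ x = u := congrArg Prod.fst hx
    rw [hx0] at hx1
    simpa using hx1.symm
  have hpj : ∀ m : M, p (W.mkQ (0, m)) = t.mkQ m := by
    intro m; rfl
  have hpsurj : Function.Surjective p := by
    intro q
    obtain ⟨m, rfl⟩ := t.mkQ_surjective q
    exact ⟨W.mkQ (0, m), hpj m⟩
  have hrange : LinearMap.range i = LinearMap.ker p := by
    apply le_antisymm
    · rintro z ⟨u, rfl⟩
      rw [LinearMap.mem_ker]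
      show t.mkQ (0 : M) = 0
      simp
    · intro z hz
      obtain ⟨⟨u, m⟩, rfl⟩ := W.mkQ_surjective z
      rw [LinearMap.mem_ker] at hz
      have hm : m ∈ t := by
        have h : t.mkQ m = 0 := hz
        rw [Submodule.mkQ_apply, Submodule.Quotient.mk_eq_zero] at h
        exact h
      refine ⟨u + φ ⟨m, hm⟩, ?_⟩
      show W.mkQ (u + φ ⟨m, hm⟩, 0) = W.mkQ (u, m)
      rw [Submodule.mkQ_apply, Submodule.mkQ_apply, Submodule.Quotient.eq]
      exact ⟨-⟨m, hm⟩, by simp [w, Prod.ext_iff]⟩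
  obtain ⟨s, hs⟩ := hext _ i p hiinj hpsurj hrange
  let j : M →ₗ[R] ((U × M) ⧸ W) := W.mkQ.comp (LinearMap.inr R U M)
  let d : M →ₗ[R] ((U × M) ⧸ W) := j - s.comp t.mkQ
  have hd : ∀ m, d m ∈ LinearMap.range i := by
    intro m
    rw [hrange, LinearMap.mem_ker]
    have h1 : p (j m) = t.mkQ m := hpj m
    have h2 : p (s (t.mkQ m)) = t.mkQ m := congrFun (congrArg DFunLike.coe hs) (t.mkQ m)
    have hdm : d m = j m - s (t.mkQ m) := rfl
    rw [hdm, map_sub, h1, h2, sub_self]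
  let e' := LinearEquiv.ofInjective i hiinj
  let ψ : M →ₗ[R] U := e'.symm.toLinearMap.comp (d.codRestrict _ hd)
  have hψ : ∀ x : t, ψ (x : M) = φ x := by
    intro x
    have hdx : d (x : M) = i (φ x) := by
      have hmk : t.mkQ (x : M) = 0 := (Submodule.Quotient.mk_eq_zero t).2 x.2
      have : d (x : M) = j (x : M) := by simp [d, hmk]
      rw [this]
      show W.mkQ (0, (x : M)) = W.mkQ (φ x, 0)
      rw [Submodule.mkQ_apply, Submodule.mkQ_apply, Submodule.Quotient.eq]
      exact ⟨x, by simp [w, Prod.ext_iff]⟩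
    have : (d.codRestrict _ hd) (x : M) = e' (φ x) := by
      apply Subtype.ext
      simpa [e'] using hdx
    show e'.symm ((d.codRestrict _ hd) (x : M)) = φ x
    rw [this, LinearEquiv.symm_apply_apply]
  ext x
  have h0 : ψ (x : M) = 0 := (hmem _).1 x.2 ψ
  simp [← hψ x, h0]

/-- if `Cogen U = ⊥U` then `(Ker Hom(-,U), Cogen U)` is a torsion pair. -/
theorem statement2 (R : Type u) [Ring R] (U : Type u) [AddCommGroup U] [Module R U]
    (hcot : ∀ (M : Type u) [AddCommGroup M] [Module R M],
      (∃ (ι : Type u) (f : M →ₗ[R] (ι → U)), Function.Injective f) ↔ Ext1Vanishes R M U) :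
    -- orthogonality: `Hom(T,F) = 0` for `T` with `Hom(T,U)=0` and `F ∈ Cogen U`
    (∀ (T F : Type u) [AddCommGroup T] [Module R T] [AddCommGroup F] [Module R F],
      (∀ f : T →ₗ[R] U, f = 0) →
      (∃ (ι : Type u) (f : F →ₗ[R] (ι → U)), Function.Injective f) →
      ∀ g : T →ₗ[R] F, g = 0) ∧
    -- every module has a torsion submodule with torsion-free quotient
    (∀ (M : Type u) [AddCommGroup M] [Module R M], ∃ t : Submodule R M,
      (∀ f : t →ₗ[R] U, f = 0) ∧
      ∃ (ι : Type u) (f : (M ⧸ t) →ₗ[R] (ι → U)), Function.Injective f) ∧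
    -- maximality of the torsion class
    (∀ (T : Type u) [AddCommGroup T] [Module R T],
      (∀ (F : Type u) [AddCommGroup F] [Module R F],
        (∃ (ι : Type u) (f : F →ₗ[R] (ι → U)), Function.Injective f) →
        ∀ g : T →ₗ[R] F, g = 0) →
      ∀ f : T →ₗ[R] U, f = 0) ∧
    -- maximality of the torsion-free class
    (∀ (F : Type u) [AddCommGroup F] [Module R F],
      (∀ (T : Type u) [AddCommGroup T] [Module R T],
        (∀ f : T →ₗ[R] U, f = 0) → ∀ g : T →ₗ[R] F, g = 0) →
      ∃ (ι : Type u) (f : F →ₗ[R] (ι → U)), Function.Injective f) := by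
  refine ⟨?_, ?_, ?_, ?_⟩
  · intro T F _ _ _ _ hT ⟨ι, f, hf⟩ g
    ext x
    have h : f (g x) = 0 := by
      funext k
      have : ((LinearMap.proj k).comp (f.comp g) : T →ₗ[R] U) = 0 := hT _
      exact congrFun (congrArg DFunLike.coe this) x
    have := hf (by rw [h, map_zero] : f (g x) = f 0)
    simp [this]
  · exact torsionSub R U hcot
  · intro T _ _ hyp f
    exact hyp U ⟨PUnit, LinearMap.pi (fun _ => LinearMap.id),
      fun a b hab => congrFun hab PUnit.unit⟩ f
  · intro F _ _ hyp
    obtain ⟨t, ht, ι, f, hf⟩ := torsionSub R U hcot F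
    have hsub : t.subtype = 0 := hyp t ht t.subtype
    have htbot : t = ⊥ := by
      rw [Submodule.eq_bot_iff]
      intro x hx
      have : t.subtype ⟨x, hx⟩ = 0 := by rw [hsub]; rfl
      exact this
    refine ⟨ι, f.comp t.mkQ, hf.comp ?_⟩
    rw [← LinearMap.ker_eq_bot, Submodule.ker_mkQ, htbot]
end

section
/- Let U be a 1-cotilting (R,S)-bimodule and M a module. If H⁰(RΔ)²(M) = 0 and H^{-1}(RΔ)²(M) = 0, then M = 0. Equivalently, if Hom(Ext¹(M,U),U) = 0, Hom(Hom(M,U),U) = 0, and Ext¹(Ext¹(M,U),U) = 0, then M = 0. -/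
set_option linter.unusedVariables false

universe u

open CategoryTheory Opposite Function LinearMap

/-- The contravariant functor `Hom_A(-,U) : (A-Mod)ᵒᵖ → B-Mod` induced by an `(A,B)`-bimodule. -/
def dualFunctor (A B : Type u) [Ring A] [Ring B] (U : Type u) [AddCommGroup U] [Module A U]
    [Module B U] [SMulCommClass A B U] :
    (ModuleCat.{u} A)ᵒᵖ ⥤ ModuleCat.{u} B where
  obj M := ModuleCat.of B (M.unop →ₗ[A] U)
  map f := ModuleCat.ofHom (precompMap A B U f.unop.hom)
  map_id M := by ext φ; rfl
  map_comp f g := by ext φ; rfl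

/-- The evaluation maps as a natural transformation `id → Δ²`. -/
def evalNat (A B : Type u) [Ring A] [Ring B] (U : Type u) [AddCommGroup U] [Module A U]
    [Module B U] [SMulCommClass A B U] [SMulCommClass B A U] :
    𝟭 (ModuleCat.{u} A) ⟶ (dualFunctor A B U).rightOp ⋙ dualFunctor B A U where
  app M := ModuleCat.ofHom (evalMap A B U M)
  naturality X Y f := by ext x; rfl

variable (R S : Type u) [Ring R] [Ring S] (U : Type u) [AddCommGroup U] [Module R U]
  [Module Sᵐᵒᵖ U] [SMulCommClass R Sᵐᵒᵖ U] [SMulCommClass Sᵐᵒᵖ R U]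

/-- Data of the duality between `D(R)` and `D(Mod-S)` induced by a 1-cotilting bimodule `U`:
`Γ` are the functors `Ext¹(-,U)`, `H` are the functors `H⁰((RHom(-,U))²)`,
`η` the degree-0 components of the units of the derived adjunction,
and `α`, `β` the natural exact sequence `0 → Γ²M → H M → Δ²M → 0`,
with `β ∘ η` being the evaluation maps. -/
structure CotiltingDualityData where
  Γ₁ : (ModuleCat.{u} R)ᵒᵖ ⥤ ModuleCat.{u} Sᵐᵒᵖ
  Γ₂ : (ModuleCat.{u} Sᵐᵒᵖ)ᵒᵖ ⥤ ModuleCat.{u} R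
  H₁ : ModuleCat.{u} R ⥤ ModuleCat.{u} R
  H₂ : ModuleCat.{u} Sᵐᵒᵖ ⥤ ModuleCat.{u} Sᵐᵒᵖ
  η₁ : 𝟭 (ModuleCat.{u} R) ⟶ H₁
  η₂ : 𝟭 (ModuleCat.{u} Sᵐᵒᵖ) ⟶ H₂
  α₁ : Γ₁.rightOp ⋙ Γ₂ ⟶ H₁
  α₂ : Γ₂.rightOp ⋙ Γ₁ ⟶ H₂
  β₁ : H₁ ⟶ (dualFunctor R Sᵐᵒᵖ U).rightOp ⋙ dualFunctor Sᵐᵒᵖ R U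
  β₂ : H₂ ⟶ (dualFunctor Sᵐᵒᵖ R U).rightOp ⋙ dualFunctor R Sᵐᵒᵖ U
  mono_α₁ : ∀ M, Function.Injective (α₁.app M)
  mono_α₂ : ∀ N, Function.Injective (α₂.app N)
  epi_β₁ : ∀ M, Function.Surjective (β₁.app M)
  epi_β₂ : ∀ N, Function.Surjective (β₂.app N)
  exact₁ : ∀ M, LinearMap.range (α₁.app M).hom = LinearMap.ker (β₁.app M).hom
  exact₂ : ∀ N, LinearMap.range (α₂.app N).hom = LinearMap.ker (β₂.app N).hom
  compat₁ : η₁ ≫ β₁ = evalNat R Sᵐᵒᵖ U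
  compat₂ : η₂ ≫ β₂ = evalNat Sᵐᵒᵖ R U
  faithful₁ : ∀ M : ModuleCat.{u} R, (∀ φ : M →ₗ[R] U, φ = 0) →
    Subsingleton (Γ₁.obj (op M)) → Subsingleton M
  faithful₂ : ∀ N : ModuleCat.{u} Sᵐᵒᵖ, (∀ φ : N →ₗ[Sᵐᵒᵖ] U, φ = 0) →
    Subsingleton (Γ₂.obj (op N)) → Subsingleton N

variable {R S U}

/-- A left `R`-module is `D`-reflexive when `η⁰` is an isomorphism and `Hom(Ext¹(M,U),U) = 0`. -/
def CotiltingDualityData.DReflexive₁ (D : CotiltingDualityData R S U) (M : ModuleCat.{u} R) :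
    Prop :=
  IsIso (D.η₁.app M) ∧ ∀ g : (D.Γ₁.obj (op M)) →ₗ[Sᵐᵒᵖ] U, g = 0

/-- A right `S`-module is `D`-reflexive when `η⁰` is an isomorphism and `Hom(Ext¹(N,U),U) = 0`. -/
def CotiltingDualityData.DReflexive₂ (D : CotiltingDualityData R S U) (N : ModuleCat.{u} Sᵐᵒᵖ) :
    Prop :=
  IsIso (D.η₂.app N) ∧ ∀ g : (D.Γ₂.obj (op N)) →ₗ[R] U, g = 0

/-!
Once `Hom(M,U) = 0` and `Γ²M = 0`, the faithfulness of `(Hom(-,U), Ext¹(-,U))` applied first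
to `Ext¹(M,U)` and then to `M` forces `M = 0`. If `H⁰(RΔ)²(M) = 0`, both hypotheses follow:
`Γ²M` embeds into `H⁰(RΔ)²(M)`, and the evaluation map `M → Δ²M` factors through it.
-/

theorem eq_zero_of_forall_evalMap_eq_zero {A B : Type u} [Ring A] [Ring B] {U : Type u}
    [AddCommGroup U] [Module A U] [Module B U] [SMulCommClass A B U] [SMulCommClass B A U]
    {M : Type u} [AddCommGroup M] [Module A M] (h : ∀ m : M, evalMap A B U M m = 0)
    (φ : M →ₗ[A] U) : φ = 0 := by
  ext m
  exact LinearMap.congr_fun (h m) φ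

namespace CotiltingDualityData

variable (D : CotiltingDualityData R S U) {M : ModuleCat.{u} R}

theorem subsingleton_Γ₂_Γ₁_of_subsingleton_H₁ (hH : Subsingleton (D.H₁.obj M)) :
    Subsingleton (D.Γ₂.obj (op (D.Γ₁.obj (op M)))) :=
  ⟨fun _ _ => D.mono_α₁ M (Subsingleton.elim _ _)⟩

theorem evalMap_eq_zero_of_subsingleton_H₁ (hH : Subsingleton (D.H₁.obj M)) (m : M) :
    evalMap R Sᵐᵒᵖ U M m = 0 := by
  have hδ : (D.η₁.app M ≫ D.β₁.app M) m = evalMap R Sᵐᵒᵖ U M m := by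
    rw [← NatTrans.comp_app, D.compat₁]
    rfl
  rw [← hδ, ConcreteCategory.comp_apply, Subsingleton.elim (D.η₁.app M m) 0, map_zero]
  rfl

theorem subsingleton_of_dual_Γ₁_eq_zero_of_dual_eq_zero
    (hΓ : ∀ g : (D.Γ₁.obj (op M)) →ₗ[Sᵐᵒᵖ] U, g = 0) (hΔ : ∀ φ : M →ₗ[R] U, φ = 0)
    (hΓ₂Γ₁ : Subsingleton (D.Γ₂.obj (op (D.Γ₁.obj (op M))))) : Subsingleton M :=
  D.faithful₁ M hΔ (D.faithful₂ _ hΓ hΓ₂Γ₁)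

end CotiltingDualityData

theorem statement7_general
    (D : CotiltingDualityData R S U) (M : ModuleCat.{u} R) :
    (Subsingleton (D.H₁.obj M) →
      (∀ g : (D.Γ₁.obj (op M)) →ₗ[Sᵐᵒᵖ] U, g = 0) → Subsingleton M) ∧
    ((∀ g : (D.Γ₁.obj (op M)) →ₗ[Sᵐᵒᵖ] U, g = 0) →
      (∀ g : (M →ₗ[R] U) →ₗ[Sᵐᵒᵖ] U, g = 0) →
      Subsingleton (D.Γ₂.obj (op (D.Γ₁.obj (op M)))) → Subsingleton M) :=
  ⟨fun hH hΓ => D.subsingleton_of_dual_Γ₁_eq_zero_of_dual_eq_zero hΓ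
      (eq_zero_of_forall_evalMap_eq_zero (D.evalMap_eq_zero_of_subsingleton_H₁ hH))
      (D.subsingleton_Γ₂_Γ₁_of_subsingleton_H₁ hH),
    fun hΓ hΔ => D.subsingleton_of_dual_Γ₁_eq_zero_of_dual_eq_zero hΓ
      (eq_zero_of_forall_evalMap_eq_zero fun _ => hΔ _)⟩

/-- if `H⁰(RΔ)²(M) = 0` and `H^{-1}(RΔ)²(M) = ΔΓM = 0` then `M = 0`;
equivalently, if `ΔΓM = 0`, `Δ²M = 0` and `Γ²M = 0` then `M = 0`. -/
theorem statement7 (hRU : IsCotilting R U) (hUS : IsCotilting Sᵐᵒᵖ U)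
    (D : CotiltingDualityData R S U) (M : ModuleCat.{u} R) :
    (Subsingleton (D.H₁.obj M) →
      (∀ g : (D.Γ₁.obj (op M)) →ₗ[Sᵐᵒᵖ] U, g = 0) → Subsingleton M) ∧
    ((∀ g : (D.Γ₁.obj (op M)) →ₗ[Sᵐᵒᵖ] U, g = 0) →
      (∀ g : (M →ₗ[R] U) →ₗ[Sᵐᵒᵖ] U, g = 0) →
      Subsingleton (D.Γ₂.obj (op (D.Γ₁.obj (op M)))) → Subsingleton M) :=
  statement7_general D M
end

section
/- Let U be a 1-cotilting (R,S)-bimodule and M a U-torsionless left R-module (the evaluation map δ_M : M → Hom_S(Hom_R(M,U),U) is injective). Then Ext¹_R(Coker δ_M, U) = 0, i.e. the cokernel of the evaluation map lies in Cogen U. -/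
set_option linter.unusedVariables false

universe u

open Function LinearMap

/-- Key lemma: if `X` embeds into a product `U^α`, then `Ext¹(X,U) = 0`. -/
theorem ext1_of_embeds (A : Type u) [Ring A] (U : Type u) [AddCommGroup U] [Module A U]
    (h : IsCotilting A U) (α : Type u) (X : Type u) [AddCommGroup X] [Module A X]
    (j : X →ₗ[A] (α → U)) (hj : Function.Injective j) :
    Ext1Vanishes A X U := by
  intro E _ _ i p hi hp hip
  obtain ⟨E₀, E₁, hE₀, hE₁, ι, π, hι, hπ, hιπ⟩ := h.1
  -- extend ι along i to φ : E → E₀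
  obtain ⟨φ, hφ⟩ := hE₀.out i hi ι
  -- induced map ψ : X → E₁ with ψ ∘ p = π ∘ φ
  have hker : LinearMap.ker p ≤ LinearMap.ker (π.comp φ) := by
    intro e he
    rw [← hip] at he
    obtain ⟨u, rfl⟩ := he
    simp only [LinearMap.mem_ker, LinearMap.comp_apply, hφ]
    rw [← LinearMap.mem_ker, ← hιπ]
    exact ⟨u, rfl⟩
  let eqv := p.quotKerEquivOfSurjective hp
  let ψ : X →ₗ[A] E₁ := (Submodule.liftQ (LinearMap.ker p) (π.comp φ) hker).comp
    eqv.symm.toLinearMap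
  have hψ : ∀ e : E, ψ (p e) = π (φ e) := by
    intro e
    have h1 : eqv.symm (p e) = Submodule.Quotient.mk e := by
      apply eqv.injective
      simp [eqv, LinearMap.quotKerEquivOfSurjective]
    simp only [ψ, LinearMap.comp_apply, LinearEquiv.coe_coe, h1]
    rfl
  -- extend ψ along j to Ψ
  obtain ⟨Ψ, hΨ⟩ := hE₁.out j hj ψ
  -- pullback F of π and Ψ
  let F : Submodule A (E₀ × (α → U)) :=
    LinearMap.ker (π.comp (LinearMap.fst A E₀ (α → U)) - Ψ.comp (LinearMap.snd A E₀ (α → U)))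
  have memF : ∀ z : E₀ × (α → U), z ∈ F ↔ π z.1 = Ψ z.2 := by
    intro z
    simp [F, LinearMap.mem_ker, sub_eq_zero]
  let iF : U →ₗ[A] F := LinearMap.codRestrict F
    ((LinearMap.inl A E₀ (α → U)).comp ι) (fun u => by
      rw [memF]
      simp only [LinearMap.comp_apply, LinearMap.inl_apply, map_zero]
      rw [← LinearMap.mem_ker, ← hιπ]
      exact ⟨u, rfl⟩)
  let pF : F →ₗ[A] (α → U) := (LinearMap.snd A E₀ (α → U)).comp F.subtype
  have hiF : Function.Injective iF := by
    intro u v huv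
    apply hι
    have := congrArg (fun z : F => (z : E₀ × (α → U)).1) huv
    simpa [iF] using this
  have hpF : Function.Surjective pF := by
    intro y
    obtain ⟨e₀, he₀⟩ := hπ (Ψ y)
    exact ⟨⟨(e₀, y), (memF _).2 he₀⟩, rfl⟩
  have hiFpF : LinearMap.range iF = LinearMap.ker pF := by
    apply le_antisymm
    · rintro _ ⟨u, rfl⟩
      simp [iF, pF, LinearMap.mem_ker]
    · rintro ⟨⟨e₀, y⟩, hz⟩ hy
      have hy2 : y = 0 := hy
      have : π e₀ = 0 := by
        have := (memF _).1 hz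
        simpa [hy2] using this
      rw [← LinearMap.mem_ker, ← hιπ] at this
      obtain ⟨u, hu⟩ := this
      exact ⟨u, by apply Subtype.ext; simp [iF, hu, hy2]⟩
  obtain ⟨σ, hσ⟩ := h.2.1 α F iF pF hiF hpF hiFpF
  -- τ : X → E₀, τ x = first coordinate of σ (j x)
  let τ : X →ₗ[A] E₀ := (LinearMap.fst A E₀ (α → U)).comp (F.subtype.comp (σ.comp j))
  have hτ : ∀ x : X, π (τ x) = ψ x := by
    intro x
    have h1 : (σ (j x) : E₀ × (α → U)).2 = j x := by
      have := congrFun (congrArg DFunLike.coe hσ) (j x)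
      simpa [pF] using this
    have h2 := (memF _).1 (σ (j x)).2
    rw [h1] at h2
    simpa [τ, hΨ] using h2
  -- ρ : E → U,  ι (ρ e) = φ e - τ (p e)
  have hland : ∀ e : E, φ e - τ (p e) ∈ LinearMap.range ι := by
    intro e
    rw [hιπ, LinearMap.mem_ker, map_sub, hτ, hψ, sub_self]
  let eι : U ≃ₗ[A] LinearMap.range ι := LinearEquiv.ofInjective ι hι
  let ρ : E →ₗ[A] U := eι.symm.toLinearMap.comp
    (LinearMap.codRestrict (LinearMap.range ι) (φ - τ.comp p) (fun e => hland e))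
  have hρ : ∀ e : E, ι (ρ e) = φ e - τ (p e) := by
    intro e
    have : (eι (ρ e) : E₀) = φ e - τ (p e) := by
      simp only [ρ, LinearMap.comp_apply, LinearEquiv.coe_coe, LinearEquiv.apply_symm_apply]
      rfl
    rwa [show (eι (ρ e) : E₀) = ι (ρ e) from rfl] at this
  have hρi : ∀ u : U, ρ (i u) = u := by
    intro u
    apply hι
    rw [hρ]
    have : p (i u) = 0 := by
      rw [← LinearMap.mem_ker, ← hip]; exact ⟨u, rfl⟩
    rw [this, map_zero, sub_zero, hφ]
  -- Θ : E ≃ U × X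
  let Θ : E →ₗ[A] U × X := LinearMap.prod ρ p
  have hΘinj : Function.Injective Θ := by
    rw [injective_iff_map_eq_zero]
    intro e he
    have h1 : p e = 0 := congrArg Prod.snd he
    have h2 : ρ e = 0 := congrArg Prod.fst he
    rw [← LinearMap.mem_ker, ← hip] at h1
    obtain ⟨u, rfl⟩ := h1
    rw [hρi] at h2
    rw [h2, map_zero]
  have hΘsurj : Function.Surjective Θ := by
    rintro ⟨u, x⟩
    obtain ⟨e, he⟩ := hp x
    refine ⟨e + i (u - ρ e), ?_⟩
    have hpi : p (i (u - ρ e)) = 0 := by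
      rw [← LinearMap.mem_ker, ← hip]; exact ⟨_, rfl⟩
    apply Prod.ext
    · show ρ _ = u
      rw [map_add, hρi]; abel
    · show p _ = x
      rw [map_add, hpi, add_zero, he]
  let eΘ := LinearEquiv.ofBijective Θ ⟨hΘinj, hΘsurj⟩
  refine ⟨eΘ.symm.toLinearMap.comp (LinearMap.inr A U X), ?_⟩
  ext x
  have : p (eΘ.symm (0, x)) = (Θ (eΘ.symm (0, x))).2 := rfl
  simp only [LinearMap.comp_apply, LinearEquiv.coe_coe, LinearMap.inr_apply, LinearMap.id_apply]
  rw [this]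
  rw [show Θ (eΘ.symm (0, x)) = eΘ (eΘ.symm (0,x)) from rfl, LinearEquiv.apply_symm_apply]

theorem statement16' (R S : Type u) [Ring R] [Ring S] (U : Type u) [AddCommGroup U]
    [Module R U] [Module Sᵐᵒᵖ U] [SMulCommClass R Sᵐᵒᵖ U] [SMulCommClass Sᵐᵒᵖ R U]
    (hRU : IsCotilting R U)
    (M : Type u) [AddCommGroup M] [Module R M]
    (δ : M →ₗ[R] ((M →ₗ[R] U) →ₗ[Sᵐᵒᵖ] U))
    (hδ : ∀ (m : M) (φ : M →ₗ[R] U), δ m φ = φ m) :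
    Ext1Vanishes R
      (((M →ₗ[R] U) →ₗ[Sᵐᵒᵖ] U) ⧸ LinearMap.range δ) U := by
  classical
  intro E _ _ i p hi hp hip
  set D2 := (M →ₗ[R] U) →ₗ[Sᵐᵒᵖ] U with hD2
  let q : D2 →ₗ[R] (D2 ⧸ LinearMap.range δ) := (LinearMap.range δ).mkQ
  -- pullback E' of p and q
  let E' : Submodule R (E × D2) :=
    LinearMap.ker (p.comp (LinearMap.fst R E D2) - q.comp (LinearMap.snd R E D2))
  have memE' : ∀ z : E × D2, z ∈ E' ↔ p z.1 = q z.2 := by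
    intro z; simp [E', LinearMap.mem_ker, sub_eq_zero]
  have hpi0 : ∀ u : U, p (i u) = 0 := by
    intro u; rw [← LinearMap.mem_ker, ← hip]; exact ⟨u, rfl⟩
  let iE' : U →ₗ[R] E' := LinearMap.codRestrict E'
    ((LinearMap.inl R E D2).comp i) (fun u => by
      rw [memE']; simp [hpi0])
  let pE' : E' →ₗ[R] D2 := (LinearMap.snd R E D2).comp E'.subtype
  have hiE' : Function.Injective iE' := by
    intro u v huv
    apply hi
    exact congrArg (fun z : E' => (z : E × D2).1) huv
  have hpE' : Function.Surjective pE' := by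
    intro x
    obtain ⟨e, he⟩ := hp (q x)
    exact ⟨⟨(e, x), (memE' _).2 he⟩, rfl⟩
  have hipE' : LinearMap.range iE' = LinearMap.ker pE' := by
    apply le_antisymm
    · rintro _ ⟨u, rfl⟩
      simp [iE', pE', LinearMap.mem_ker]
    · rintro ⟨⟨e, x⟩, hz⟩ hy
      have hy2 : x = 0 := hy
      have hpe : p e = 0 := by
        have := (memE' _).1 hz
        simpa [hy2] using this
      rw [← LinearMap.mem_ker, ← hip] at hpe
      obtain ⟨u, hu⟩ := hpe
      exact ⟨u, by apply Subtype.ext; simp [iE', hu, hy2]⟩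
  -- the embedding D2 ↪ U^(ΔM)
  let j : D2 →ₗ[R] ((M →ₗ[R] U) → U) :=
    { toFun := fun f φ => f φ
      map_add' := fun f g => rfl
      map_smul' := fun r f => rfl }
  have hj : Function.Injective j := fun f g hfg => LinearMap.ext fun φ => congrFun hfg φ
  obtain ⟨t, ht⟩ := ext1_of_embeds R U hRU (M →ₗ[R] U) D2 j hj E' iE' pE' hiE' hpE' hipE'
  let t' : D2 →ₗ[R] E := (LinearMap.fst R E D2).comp (E'.subtype.comp t)
  have ht2 : ∀ x : D2, (t x : E × D2).2 = x := fun x =>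
    congrFun (congrArg DFunLike.coe ht) x
  have hpt' : ∀ x : D2, p (t' x) = q x := by
    intro x
    have := (memE' _).1 (t x).2
    rwa [ht2 x] at this
  -- t' ∘ δ lands in range i
  have hland : ∀ m : M, t' (δ m) ∈ LinearMap.range i := by
    intro m
    rw [hip, LinearMap.mem_ker, hpt']
    exact (Submodule.Quotient.mk_eq_zero _).2 ⟨m, rfl⟩
  let eI : U ≃ₗ[R] LinearMap.range i := LinearEquiv.ofInjective i hi
  let g : M →ₗ[R] U := eI.symm.toLinearMap.comp
    (LinearMap.codRestrict (LinearMap.range i) (t'.comp δ) hland)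
  have hg : ∀ m : M, i (g m) = t' (δ m) := by
    intro m
    have : (eI (g m) : E) = t' (δ m) := by
      simp only [g, LinearMap.comp_apply, LinearEquiv.coe_coe, LinearEquiv.apply_symm_apply]
      rfl
    exact this
  -- h : D2 → U, f ↦ f g; then h ∘ δ = g
  let h : D2 →ₗ[R] U :=
    { toFun := fun f => f g
      map_add' := fun f f' => rfl
      map_smul' := fun r f => rfl }
  have hh : ∀ m : M, h (δ m) = g m := fun m => hδ m g
  let s' : D2 →ₗ[R] E := t' - i.comp h
  have hs'δ : LinearMap.range δ ≤ LinearMap.ker s' := by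
    rintro _ ⟨m, rfl⟩
    simp only [LinearMap.mem_ker, s', LinearMap.sub_apply, LinearMap.comp_apply, hh, hg,
      sub_self]
  refine ⟨Submodule.liftQ (LinearMap.range δ) s' hs'δ, ?_⟩
  ext x
  simp only [LinearMap.comp_apply, Submodule.mkQ_apply, Submodule.liftQ_apply,
    LinearMap.id_apply]
  show p (t' x - i (h x)) = _
  rw [map_sub, hpi0, sub_zero, hpt']
  rfl

/-- for a `Δ`-torsionless module `M` over a 1-cotilting bimodule,
`Ext¹_R(Coker δ_M, U) = 0`, i.e. the cokernel of the evaluation map lies in `Cogen U`. -/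
theorem statement16 (R S : Type u) [Ring R] [Ring S] (U : Type u) [AddCommGroup U]
    [Module R U] [Module Sᵐᵒᵖ U] [SMulCommClass R Sᵐᵒᵖ U] [SMulCommClass Sᵐᵒᵖ R U]
    (hRU : IsCotilting R U) (hUS : IsCotilting Sᵐᵒᵖ U)
    (M : Type u) [AddCommGroup M] [Module R M]
    (hM : Function.Injective (evalMap R Sᵐᵒᵖ U M)) :
    Ext1Vanishes R
      (((M →ₗ[R] U) →ₗ[Sᵐᵒᵖ] U) ⧸ LinearMap.range (evalMap R Sᵐᵒᵖ U M)) U :=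
  statement16' R S U hRU M (evalMap R Sᵐᵒᵖ U M) (fun m φ => rfl)
end

section
/- Let U be a 1-cotilting (R,S)-bimodule with R = End(U_S), and let M be a finitely related left R-module (there is an exact sequence 0 → K → P → M → 0 with P projective and K finitely generated). Then Hom_S(Ext¹_R(M,U),U) = 0. -/
/-!
Let `G : Hom_R(K,U) → U` be `g` composed with the quotient map. Because `U_S` has injective
dimension at most one and `Ext¹_S(U^β,U) = 0`, every module cogenerated by `U` has
`Ext¹_S(-,U) = 0`. Presenting `R^n ↠ K`, the cokernel of `Hom_R(K,U) ↪ Hom_R(R^n,U)` is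
cogenerated by `U`, so `G` extends to `Hom_R(R^n,U) ≅ U^n`; as `R = End(U_S)`, the extension is
evaluation at some `w ∈ R^n`, hence `G = δ_K(k)` for the image `k` of `w`. Since `G` kills every
`ψ ∘ i`, `δ_P(i k) = 0`; but `δ_P` is injective, `P` being projective and `U` a faithful
`R`-module. So `k = 0` and `g = 0`.
-/

set_option linter.unusedVariables false

universe u

open Function LinearMap

namespace LinearMap

variable {A : Type u} [Ring A] {X Y Z : Type u} [AddCommGroup X] [Module A X]
  [AddCommGroup Y] [Module A Y] [AddCommGroup Z] [Module A Z]

theorem exists_comp_eq_of_ker_le {p : X →ₗ[A] Y} (hp : Surjective p) {σ : X →ₗ[A] Z}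
    (h : ker p ≤ ker σ) : ∃ s : Y →ₗ[A] Z, s ∘ₗ p = σ := by
  refine ⟨(ker p).liftQ σ h ∘ₗ (p.quotKerEquivOfSurjective hp).symm.toLinearMap, ?_⟩
  ext x
  have hx : (p.quotKerEquivOfSurjective hp).symm (p x) = Submodule.Quotient.mk x :=
    (LinearEquiv.symm_apply_eq _).mpr rfl
  simp [hx]

theorem exists_comp_eq_of_range_le {ι : X →ₗ[A] Y} (hι : Injective ι) {q : Z →ₗ[A] Y}
    (h : range q ≤ range ι) : ∃ r : Z →ₗ[A] X, ι ∘ₗ r = q := by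
  refine ⟨(LinearEquiv.ofInjective ι hι).symm.toLinearMap ∘ₗ
    q.codRestrict (range ι) fun z => h (mem_range_self q z), ?_⟩
  ext z
  exact congr_arg Subtype.val ((LinearEquiv.ofInjective ι hι).apply_symm_apply _)

end LinearMap

section Extensions

variable {A : Type u} [Ring A] {U : Type u} [AddCommGroup U] [Module A U]

theorem ext1Vanishes_of_forall_exists_retraction {X : Type u} [AddCommGroup X] [Module A X]
    (h : ∀ (E : Type u) [AddCommGroup E] [Module A E] (i : U →ₗ[A] E) (p : E →ₗ[A] X),
      Injective i → Surjective p → range i = ker p → ∃ r : E →ₗ[A] U, r ∘ₗ i = LinearMap.id) :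
    Ext1Vanishes A X U := by
  intro E _ _ i p hi hp hip
  have hexact : Exact i p := exact_iff.mpr hip.symm
  exact ((hexact.split_tfae hi hp).out 0 1).mpr (h E i p hi hp hip)

variable {E₀ E₁ : Type u} [AddCommGroup E₀] [Module A E₀] [AddCommGroup E₁] [Module A E₁]
  {ι : U →ₗ[A] E₀} {π : E₀ →ₗ[A] E₁}

/-- The pullback of `0 → U → E₀ → E₁ → 0` along `F` splits. -/
theorem Ext1Vanishes.exists_comp_eq {V : Type u} [AddCommGroup V] [Module A V]
    (hV : Ext1Vanishes A V U) (hι : Injective ι) (hπ : Surjective π) (hιπ : range ι = ker π)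
    (F : V →ₗ[A] E₁) : ∃ Λ : V →ₗ[A] E₀, π ∘ₗ Λ = F := by
  let Q := ker (π ∘ₗ fst A E₀ V - F ∘ₗ snd A E₀ V)
  have hπι : ∀ u, π (ι u) = 0 := (exact_iff.mpr hιπ.symm).apply_apply_eq_zero
  let ι' : U →ₗ[A] Q := (inl A E₀ V ∘ₗ ι).codRestrict Q fun u =>
    show π (ι u) - F 0 = 0 by simp [hπι]
  let p' : Q →ₗ[A] V := snd A E₀ V ∘ₗ Q.subtype
  have hι' : Injective ι' := fun u v huv => hι congr(($huv : E₀ × V).1)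
  have hp' : Surjective p' := by
    intro v
    obtain ⟨e, he⟩ := hπ (F v)
    exact ⟨⟨(e, v), show π e - F v = 0 by simp [he]⟩, rfl⟩
  have hι'p' : range ι' = ker p' := by
    refine le_antisymm (by rintro _ ⟨u, rfl⟩; rfl) ?_
    rintro ⟨⟨e, v⟩, hev⟩ (rfl : v = 0)
    obtain ⟨u, rfl⟩ : e ∈ range ι := by
      have hev' : π e - F 0 = 0 := hev
      rw [hιπ, mem_ker]; simpa using hev'
    exact ⟨u, rfl⟩
  obtain ⟨s, hs⟩ := hV Q ι' p' hι' hp' hι'p'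
  refine ⟨fst A E₀ V ∘ₗ Q.subtype ∘ₗ s, LinearMap.ext fun v => ?_⟩
  have hsv : ((s v : E₀ × V)).2 = v := congr($hs v)
  have hmem : π (s v : E₀ × V).1 - F (s v : E₀ × V).2 = 0 := (s v).2
  rw [hsv, sub_eq_zero] at hmem
  exact hmem

variable [Module.Injective A E₀]

/-- `Ext¹(X, U)` is the cokernel of `Hom(X, E₀) → Hom(X, E₁)`. -/
theorem ext1Vanishes_of_forall_exists_comp_eq {X : Type u} [AddCommGroup X] [Module A X]
    (hι : Injective ι) (hιπ : range ι = ker π)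
    (h : ∀ F : X →ₗ[A] E₁, ∃ Λ : X →ₗ[A] E₀, π ∘ₗ Λ = F) : Ext1Vanishes A X U := by
  refine ext1Vanishes_of_forall_exists_retraction fun E _ _ i p hi hp hip => ?_
  obtain ⟨f, hf⟩ := Module.Injective.out i hi ι
  obtain ⟨fbar, hfbar⟩ : ∃ fbar : X →ₗ[A] E₁, fbar ∘ₗ p = π ∘ₗ f := by
    refine exists_comp_eq_of_ker_le hp ?_
    rw [← hip]
    rintro _ ⟨u, rfl⟩
    rw [mem_ker, LinearMap.comp_apply, hf]
    exact (exact_iff.mpr hιπ.symm).apply_apply_eq_zero u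
  obtain ⟨Λ, hΛ⟩ := h fbar
  obtain ⟨r, hr⟩ : ∃ r : E →ₗ[A] U, ι ∘ₗ r = f - Λ ∘ₗ p := by
    refine exists_comp_eq_of_range_le hι ?_
    rintro _ ⟨e, rfl⟩
    rw [hιπ, mem_ker, ← LinearMap.comp_apply, comp_sub, ← LinearMap.comp_assoc, hΛ, hfbar,
      sub_self, LinearMap.zero_apply]
  refine ⟨r, LinearMap.ext fun u => hι ?_⟩
  have hpi : p (i u) = 0 := (exact_iff.mpr hip.symm).apply_apply_eq_zero u
  simpa [hf, hpi] using congr($hr (i u))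

theorem exists_extend_of_ext1Vanishes_quotient {X Y : Type u} [AddCommGroup X] [Module A X]
    [AddCommGroup Y] [Module A Y] (hι : Injective ι) (hπ : Surjective π) (hιπ : range ι = ker π)
    {m : X →ₗ[A] Y} (hm : Injective m) (hC : Ext1Vanishes A (Y ⧸ range m) U) (g : X →ₗ[A] U) :
    ∃ G : Y →ₗ[A] U, G ∘ₗ m = g := by
  obtain ⟨G₀, hG₀⟩ := Module.Injective.out m hm (ι ∘ₗ g)
  have hπι : ∀ u, π (ι u) = 0 := (exact_iff.mpr hιπ.symm).apply_apply_eq_zero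
  have hker : range m ≤ ker (π ∘ₗ G₀) := by
    rintro _ ⟨x, rfl⟩
    simp [hG₀, hπι]
  obtain ⟨Λ, hΛ⟩ := hC.exists_comp_eq hι hπ hιπ ((range m).liftQ _ hker)
  obtain ⟨G, hG⟩ : ∃ G : Y →ₗ[A] U, ι ∘ₗ G = G₀ - Λ ∘ₗ (range m).mkQ := by
    refine exists_comp_eq_of_range_le hι ?_
    rintro _ ⟨y, rfl⟩
    rw [hιπ, mem_ker, ← LinearMap.comp_apply, comp_sub, ← LinearMap.comp_assoc, hΛ,
      Submodule.liftQ_mkQ, sub_self, LinearMap.zero_apply]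
  refine ⟨G, LinearMap.ext fun x => hι ?_⟩
  simpa [hG₀, (Submodule.Quotient.mk_eq_zero _).mpr (mem_range_self m x)] using
    congr($hG (m x))

end Extensions

namespace IsCotilting

variable {A : Type u} [Ring A] {U : Type u} [AddCommGroup U] [Module A U]

theorem ext1Vanishes_of_injective_pi (hU : IsCotilting A U) {X : Type u} [AddCommGroup X]
    [Module A X] {β : Type u} {j : X →ₗ[A] (β → U)} (hj : Injective j) :
    Ext1Vanishes A X U := by
  obtain ⟨⟨E₀, E₁, _, hE₁, ι, π, hι, hπ, hιπ⟩, hpow, -⟩ := hU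
  refine ext1Vanishes_of_forall_exists_comp_eq hι hιπ fun F => ?_
  obtain ⟨F', hF'⟩ := hE₁.out j hj F
  obtain ⟨Λ, hΛ⟩ := (hpow β).exists_comp_eq hι hπ hιπ F'
  exact ⟨Λ ∘ₗ j, LinearMap.ext fun x => by simp [← hF', ← hΛ]⟩

theorem exists_extend (hU : IsCotilting A U) {X Y : Type u} [AddCommGroup X] [Module A X]
    [AddCommGroup Y] [Module A Y] {m : X →ₗ[A] Y} (hm : Injective m)
    (hC : Ext1Vanishes A (Y ⧸ range m) U) (g : X →ₗ[A] U) : ∃ G : Y →ₗ[A] U, G ∘ₗ m = g := by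
  obtain ⟨⟨E₀, E₁, _, -, ι, π, hι, hπ, hιπ⟩, -, -⟩ := hU
  exact exists_extend_of_ext1Vanishes_quotient hι hπ hιπ hm hC g

end IsCotilting

section Duality

variable {A B : Type u} [Ring A] [Ring B] {U : Type u} [AddCommGroup U] [Module A U]
  [Module B U] [SMulCommClass A B U] {X Y : Type u} [AddCommGroup X] [Module A X]
  [AddCommGroup Y] [Module A Y]

theorem precompMap_injective {π : X →ₗ[A] Y} (hπ : Surjective π) :
    Injective (precompMap A B U π) := fun φ ψ h =>
  LinearMap.ext fun y => by obtain ⟨x, rfl⟩ := hπ y; exact congr($h x)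

/-- The embedding is restriction to `ker π`. -/
theorem exists_injective_quotient_range_precompMap {π : X →ₗ[A] Y} (hπ : Surjective π) :
    ∃ j : ((X →ₗ[A] U) ⧸ range (precompMap A B U π)) →ₗ[B] (ker π → U), Injective j := by
  let res : (X →ₗ[A] U) →ₗ[B] (ker π → U) :=
    { toFun := fun ψ x => ψ x
      map_add' := fun _ _ => rfl
      map_smul' := fun _ _ => rfl }
  have hres : range (precompMap A B U π) ≤ ker res := by
    rintro _ ⟨φ, rfl⟩
    ext x
    simp [res, precompMap, mem_ker.mp x.2]
  refine ⟨(range (precompMap A B U π)).liftQ res hres, ker_eq_bot.mp ?_⟩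
  refine Submodule.ker_liftQ_eq_bot _ _ hres fun ψ hψ => ?_
  obtain ⟨φ, hφ⟩ := exists_comp_eq_of_ker_le hπ fun x hx => congr_fun (mem_ker.mp hψ) ⟨x, hx⟩
  exact ⟨φ, hφ⟩

end Duality

section Evaluation

variable {A B : Type u} [Ring A] [Ring B] {U : Type u} [AddCommGroup U] [Module A U]
  [Module B U] [SMulCommClass A B U] [SMulCommClass B A U]

@[simp]
theorem evalMap_apply_apply {M : Type u} [AddCommGroup M] [Module A M] (x : M)
    (φ : M →ₗ[A] U) : evalMap A B U M x φ = φ x :=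
  rfl

theorem evalMap_surjective_of_fin {n : ℕ}
    (hA : Surjective (Module.toModuleEnd B U : A →+* Module.End B U)) :
    Surjective (evalMap A B U (Fin n → A)) := by
  intro G
  let e : Fin n → U →ₗ[B] ((Fin n → A) →ₗ[A] U) := fun x =>
    precompMap A B U (LinearMap.proj x) ∘ₗ (ringLmapEquivSelf A B U).symm.toLinearMap
  choose r hr using fun x => hA (G ∘ₗ e x)
  have he : ∀ x u, G (e x u) = r x • u := fun x u => (congr($(hr x) u)).symm
  refine ⟨r, LinearMap.ext fun ψ => ?_⟩
  have hψ : ψ = ∑ x, e x (ψ (Pi.single x 1)) := by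
    refine pi_ext' fun x => ext_ring ?_
    simp [e, precompMap, Pi.single_apply]
  calc ψ r = ∑ x, r x • ψ (Pi.single x 1) := by
        conv_lhs => rw [← Finset.univ_sum_single r, map_sum]
        refine Finset.sum_congr rfl fun x _ => ?_
        rw [← map_smul, ← Pi.single_smul', smul_eq_mul, mul_one]
    _ = G ψ := by simp only [← he, ← map_sum, ← hψ]

theorem evalMap_surjective_of_finite (hU : IsCotilting B U)
    (hA : Surjective (Module.toModuleEnd B U : A →+* Module.End B U))
    (K : Type u) [AddCommGroup K] [Module A K] [Module.Finite A K] :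
    Surjective (evalMap A B U K) := by
  intro G
  obtain ⟨n, π, hπ⟩ := Module.Finite.exists_fin' A K
  obtain ⟨j, hj⟩ := exists_injective_quotient_range_precompMap (B := B) (U := U) hπ
  obtain ⟨Ĝ, hĜ⟩ :=
    hU.exists_extend (precompMap_injective hπ) (hU.ext1Vanishes_of_injective_pi hj) G
  obtain ⟨w, hw⟩ := evalMap_surjective_of_fin hA Ĝ
  exact ⟨π w, LinearMap.ext fun φ => by rw [← hĜ, ← hw]; rfl⟩

theorem evalMap_injective_of_projective
    (hA : Injective (Module.toModuleEnd B U : A →+* Module.End B U))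
    (P : Type u) [AddCommGroup P] [Module A P] [Module.Projective A P] :
    Injective (evalMap A B U P) := by
  refine (injective_iff_map_eq_zero _).mpr fun x hx => ?_
  obtain ⟨s, hs⟩ := Module.projective_def.mp ‹Module.Projective A P›
  suffices s x = 0 by rw [← hs x, this, map_zero]
  ext a
  by_contra hxa
  obtain ⟨u, hu⟩ : ∃ u : U, s x a • u ≠ 0 := by
    by_contra! hall
    exact hxa (hA (LinearMap.ext fun u => by simpa using hall u))
  exact hu (by simpa using congr($hx (toSpanSingleton A U u ∘ₗ Finsupp.lapply a ∘ₗ s)))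

end Evaluation

/-- `Ext¹_R(M,U)` is computed from the presentation `0 → K → P → M → 0` as
`Hom_R(K,U)/im(Hom_R(P,U) → Hom_R(K,U))`. -/
theorem statement19_general (R S : Type u) [Ring R] [Ring S] (U : Type u) [AddCommGroup U]
    [Module R U] [Module Sᵐᵒᵖ U] [SMulCommClass R Sᵐᵒᵖ U] [SMulCommClass Sᵐᵒᵖ R U]
    (hUS : IsCotilting Sᵐᵒᵖ U)
    (hR : Function.Bijective (Module.toModuleEnd Sᵐᵒᵖ U : R →+* Module.End Sᵐᵒᵖ U))
    (K P : Type u) [AddCommGroup K] [Module R K]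
    [AddCommGroup P] [Module R P] [Module.Projective R P] [Module.Finite R K]
    (i : K →ₗ[R] P)
    (hi : Function.Injective i) :
    ∀ g : ((K →ₗ[R] U) ⧸ LinearMap.range (precompMap R Sᵐᵒᵖ U i)) →ₗ[Sᵐᵒᵖ] U,
      g = 0 := by
  intro g
  obtain ⟨k, hk⟩ := evalMap_surjective_of_finite hUS hR.2 K (g ∘ₗ (range _).mkQ)
  have hik : i k = 0 := by
    refine (injective_iff_map_eq_zero _).mp (evalMap_injective_of_projective hR.1 P) _ ?_
    ext ψ
    have hψ : ψ ∘ₗ i ∈ range (precompMap R Sᵐᵒᵖ U i) := mem_range_self _ ψ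
    simpa [(Submodule.Quotient.mk_eq_zero _).mpr hψ] using congr($hk (ψ ∘ₗ i))
  have hk0 : k = 0 := (injective_iff_map_eq_zero i).mp hi k hik
  refine Submodule.linearMap_qext _ (LinearMap.ext fun φ => ?_)
  simpa [hk0] using congr($hk φ).symm

/-- for a finitely related left `R`-module `M` over a 1-cotilting bimodule
with `R = End(U_S)`, `Hom_S(Ext¹_R(M,U),U) = 0`, where `Ext¹_R(M,U)` is computed from a
projective presentation `0 → K → P → M → 0` as `Hom_R(K,U)/im(Hom_R(P,U) → Hom_R(K,U))`. -/
theorem statement19 (R S : Type u) [Ring R] [Ring S] (U : Type u) [AddCommGroup U]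
    [Module R U] [Module Sᵐᵒᵖ U] [SMulCommClass R Sᵐᵒᵖ U] [SMulCommClass Sᵐᵒᵖ R U]
    (hRU : IsCotilting R U) (hUS : IsCotilting Sᵐᵒᵖ U)
    (hR : Function.Bijective (Module.toModuleEnd Sᵐᵒᵖ U : R →+* Module.End Sᵐᵒᵖ U))
    (M K P : Type u) [AddCommGroup M] [Module R M] [AddCommGroup K] [Module R K]
    [AddCommGroup P] [Module R P] [Module.Projective R P] [Module.Finite R K]
    (i : K →ₗ[R] P) (p : P →ₗ[R] M)
    (hi : Function.Injective i) (hp : Function.Surjective p)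
    (hex : LinearMap.range i = LinearMap.ker p) :
    ∀ g : ((K →ₗ[R] U) ⧸ LinearMap.range (precompMap R Sᵐᵒᵖ U i)) →ₗ[Sᵐᵒᵖ] U,
      g = 0 :=
  statement19_general R S U hUS hR K P i hi
end
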